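/- For any H-balanced directed graph G = (V, E) on n vertices, ε ∈ (0, 0.1), and a vertex v ∈ V with δ⁺(v) < H − 2 log n / ε, it holds that (1/2 − ε)·core(v) − 2 log n / ε ≤ δ⁺(v), where core(v) is the coreness of v in the underlying undirected graph. -/

import Mathlib

open Finset

/-- Out-degree of `v` in the directed edge set `E`. -/
def outdeg {V : Type*} [DecidableEq V] (E : Finset (V × V)) (v : V) : ℕ :=
  (E.filter fun e => e.1 = v).card

/-- A directed graph is `H`-balanced if `min(δ⁺(u), H) ≤ min(δ⁺(v), H) + 1`
for every edge `u → v`. -/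
def IsHBalanced {V : Type*} [DecidableEq V] (E : Finset (V × V)) (H : ℕ) : Prop :=
  ∀ e ∈ E, min (outdeg E e.1) H ≤ min (outdeg E e.2) H + 1

/-- Degree of `u` inside `S` in the underlying undirected graph of `E`. -/
def udegIn {V : Type*} [DecidableEq V] (E : Finset (V × V)) (S : Finset V) (u : V) : ℕ :=
  (S.filter fun w => w ≠ u ∧ ((u, w) ∈ E ∨ (w, u) ∈ E)).card

/-- Minimum degree of the induced subgraph on `S` in the underlying undirected graph. -/
def mindegIn {V : Type*} [DecidableEq V] (E : Finset (V × V)) (S : Finset V) : ℕ :=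
  if h : S.Nonempty then S.inf' h (udegIn E S) else 0

/-- Coreness of `v` in the underlying undirected graph: the maximum over subsets
`S ∋ v` of the minimum degree of the induced subgraph on `S`. -/
def core {V : Type*} [Fintype V] [DecidableEq V] (E : Finset (V × V)) (v : V) : ℕ :=
  ((univ : Finset V).powerset.filter fun S => v ∈ S).sup (mindegIn E)

/-!
Suppose the bound fails and let `S ∋ v` realise `core E v = k`, so that every vertex of `S` has
at least `k` neighbours in `S`. Let `T c ⊆ S` consist of the vertices whose out-degree, capped at
`H`, is at most `c`. Balance puts every in-neighbour of a vertex of `T c` into `T (c + 1)`, so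
counting the edges at `T c` gives `k |T c| ≤ c |T c| + (c + 1) |T (c + 1)|`, and while
`c + 1 ≤ (1/2 - ε) k` this means `|T (c + 1)| ≥ (1 + 4ε) |T c|`. Starting from `v ∈ T δ⁺(v)`,
the failed bound and the hypothesis on `H` allow `⌊2 log n / ε⌋` such steps, and
`(1 + 4ε) ^ ⌊2 log n / ε⌋ > n`.
-/

lemma one_add_four_mul_mul_le {k c t t' ε : ℝ} (hε : 0 ≤ ε) (hk : 0 ≤ k) (hc : 0 ≤ c)
    (ht : 0 ≤ t) (hck : c + 1 ≤ (1 / 2 - ε) * k) (h : k * t ≤ c * t + (c + 1) * t') :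
    (1 + 4 * ε) * t ≤ t' := by
  have hgap : (c + 1) * (1 + 4 * ε) ≤ k - c := by nlinarith [mul_nonneg (mul_nonneg hε hε) hk]
  refine le_of_mul_le_mul_left ?_ (by linarith : 0 < c + 1)
  calc (c + 1) * ((1 + 4 * ε) * t) = (c + 1) * (1 + 4 * ε) * t := by ring
    _ ≤ (k - c) * t := by gcongr
    _ ≤ (c + 1) * t' := by linarith

namespace Real

lemma two_mul_le_log_one_add_four_mul {ε : ℝ} (hε0 : 0 ≤ ε) (hε1 : ε ≤ 1 / 4) :
    2 * ε ≤ log (1 + 4 * ε) := by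
  have hpos : 0 < 1 + 4 * ε := by linarith
  have h := one_sub_inv_le_log_of_pos hpos
  have hinv : 1 - (1 + 4 * ε)⁻¹ = 4 * ε / (1 + 4 * ε) := by field_simp; ring
  have h2 : 2 * ε ≤ 4 * ε / (1 + 4 * ε) := by rw [le_div_iff₀ hpos]; nlinarith
  linarith

lemma lt_one_add_four_mul_pow_floor {x ε : ℝ} (hx : 2 ≤ x) (hε0 : 0 < ε) (hε1 : ε < 0.1) :
    x < (1 + 4 * ε) ^ ⌊2 * log x / ε⌋₊ := by
  have hlog2 : 0.69 < log 2 := by have := log_two_gt_d9; linarith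
  have hlogx : log 2 ≤ log x := log_le_log two_pos hx
  have hfloor := Nat.lt_floor_add_one (2 * log x / ε)
  rw [lt_pow_iff_log_lt (by linarith) (by linarith)]
  have hlog := two_mul_le_log_one_add_four_mul hε0.le (by norm_num at hε1 ⊢; linarith)
  calc log x < 4 * log x - 2 * ε := by linarith
    _ = (2 * log x / ε - 1) * (2 * ε) := by field_simp; ring
    _ ≤ ⌊2 * log x / ε⌋₊ * (2 * ε) := by gcongr; linarith
    _ ≤ ⌊2 * log x / ε⌋₊ * log (1 + 4 * ε) := by gcongr

end Real

section Digraph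

variable {V : Type*} [DecidableEq V] (E : Finset (V × V))

lemma card_filter_outNbr_le_outdeg (T : Finset V) (u : V) :
    #(T.filter fun w => (u, w) ∈ E) ≤ outdeg E u := by
  rw [outdeg, ← card_image_of_injective _ (Prod.mk_right_injective u)]
  refine card_le_card fun e he => ?_
  obtain ⟨w, hw, rfl⟩ := mem_image.1 he
  exact mem_filter.2 ⟨(mem_filter.1 hw).2, rfl⟩

lemma sum_card_filter_inNbr_le_sum_outdeg (A B : Finset V) :
    ∑ u ∈ A, #(B.filter fun w => (w, u) ∈ E) ≤ ∑ w ∈ B, outdeg E w := by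
  simp only [card_filter]
  rw [sum_comm]
  exact sum_le_sum fun w _ => by
    simpa only [card_filter] using card_filter_outNbr_le_outdeg E A w

lemma udegIn_le_outdeg_add (S : Finset V) (u : V) :
    udegIn E S u ≤ outdeg E u + #(S.filter fun w => (w, u) ∈ E) := by
  calc udegIn E S u
      ≤ #((S.filter fun w => (u, w) ∈ E) ∪ S.filter fun w => (w, u) ∈ E) := by
        refine card_le_card fun w hw => ?_
        simp only [mem_filter, mem_union] at hw ⊢
        tauto
    _ ≤ outdeg E u + #(S.filter fun w => (w, u) ∈ E) :=
        (card_union_le _ _).trans (by grw [card_filter_outNbr_le_outdeg])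

lemma udegIn_lt_card {S : Finset V} {u : V} (hu : u ∈ S) : udegIn E S u < #S :=
  card_lt_card (filter_ssubset.2 ⟨u, hu, by simp⟩)

lemma mindegIn_le_udegIn {S : Finset V} {u : V} (hu : u ∈ S) : mindegIn E S ≤ udegIn E S u := by
  rw [mindegIn, dif_pos ⟨u, hu⟩]
  exact inf'_le _ hu

lemma exists_mindegIn_eq_core [Fintype V] (v : V) :
    ∃ S : Finset V, v ∈ S ∧ mindegIn E S = core E v := by
  obtain ⟨S, hS, hcore⟩ :=
    exists_mem_eq_sup ((univ : Finset V).powerset.filter fun S => v ∈ S) ⟨univ, by simp⟩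
      (mindegIn E)
  exact ⟨S, (mem_filter.1 hS).2, hcore.symm⟩

def lowOutdegSet (H : ℕ) (S : Finset V) (c : ℕ) : Finset V :=
  S.filter fun u => min (outdeg E u) H ≤ c

variable {E} {H : ℕ} {S : Finset V} {c : ℕ}

lemma outdeg_le_of_mem_lowOutdegSet (hc : c < H) {u : V} (hu : u ∈ lowOutdegSet E H S c) :
    outdeg E u ≤ c := by
  have := (mem_filter.1 hu).2
  omega

lemma filter_inNbr_subset_lowOutdegSet (hbal : IsHBalanced E H) {u : V}
    (hu : u ∈ lowOutdegSet E H S c) :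
    S.filter (fun w => (w, u) ∈ E) ⊆ lowOutdegSet E H S (c + 1) := fun w hw => by
  obtain ⟨hwS, hwu⟩ := mem_filter.1 hw
  have : min (outdeg E w) H ≤ min (outdeg E u) H + 1 := hbal _ hwu
  have := (mem_filter.1 hu).2
  exact mem_filter.2 ⟨hwS, by omega⟩

lemma mul_card_lowOutdegSet_le (hbal : IsHBalanced E H) (hc : c + 1 < H) {k : ℕ}
    (hS : ∀ u ∈ S, k ≤ udegIn E S u) :
    k * #(lowOutdegSet E H S c) ≤
      c * #(lowOutdegSet E H S c) + (c + 1) * #(lowOutdegSet E H S (c + 1)) := by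
  set A := lowOutdegSet E H S c
  set B := lowOutdegSet E H S (c + 1)
  have hdeg : ∀ u ∈ A, udegIn E S u ≤ c + #(B.filter fun w => (w, u) ∈ E) := fun u hu => by
    have hin : #(S.filter fun w => (w, u) ∈ E) ≤ #(B.filter fun w => (w, u) ∈ E) :=
      card_le_card fun w hw =>
        mem_filter.2 ⟨filter_inNbr_subset_lowOutdegSet hbal hu hw, (mem_filter.1 hw).2⟩
    have := outdeg_le_of_mem_lowOutdegSet (by omega) hu
    have := udegIn_le_outdeg_add E S u
    omega
  have hout : ∑ w ∈ B, outdeg E w ≤ ∑ _w ∈ B, (c + 1) :=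
    sum_le_sum fun w hw => outdeg_le_of_mem_lowOutdegSet hc hw
  calc k * #A = ∑ _u ∈ A, k := by rw [sum_const, smul_eq_mul, mul_comm]
    _ ≤ ∑ u ∈ A, udegIn E S u := sum_le_sum fun u hu => hS u (mem_filter.1 hu).1
    _ ≤ ∑ u ∈ A, (c + #(B.filter fun w => (w, u) ∈ E)) := sum_le_sum hdeg
    _ ≤ c * #A + ∑ w ∈ B, outdeg E w := by
      rw [sum_add_distrib, sum_const, smul_eq_mul, mul_comm]
      grw [sum_card_filter_inNbr_le_sum_outdeg]
    _ ≤ c * #A + (c + 1) * #B := by grw [hout, sum_const, smul_eq_mul, mul_comm #B]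

lemma one_add_four_mul_pow_le_card_lowOutdegSet {k : ℕ} {ε : ℝ} (hbal : IsHBalanced E H)
    (hS : ∀ u ∈ S, k ≤ udegIn E S u) (hε : 0 ≤ ε) (hne : (lowOutdegSet E H S c).Nonempty) :
    ∀ j : ℕ, c + j < H → (c + j : ℝ) ≤ (1 / 2 - ε) * k →
      (1 + 4 * ε) ^ j ≤ #(lowOutdegSet E H S (c + j))
  | 0, _, _ => by simpa using hne.card_pos
  | j + 1, hH, hk => by
    have ih := one_add_four_mul_pow_le_card_lowOutdegSet hbal hS hε hne j (by omega)
      (by push_cast at hk; linarith)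
    have hstep : (k : ℝ) * #(lowOutdegSet E H S (c + j)) ≤
        (c + j : ℕ) * #(lowOutdegSet E H S (c + j)) +
          ((c + j : ℕ) + 1) * #(lowOutdegSet E H S (c + j + 1)) := by
      exact_mod_cast mul_card_lowOutdegSet_le hbal (by omega) hS
    calc (1 + 4 * ε) ^ (j + 1) = (1 + 4 * ε) * (1 + 4 * ε) ^ j := pow_succ' _ _
      _ ≤ (1 + 4 * ε) * #(lowOutdegSet E H S (c + j)) := by gcongr
      _ ≤ #(lowOutdegSet E H S (c + (j + 1))) :=
        one_add_four_mul_mul_le hε k.cast_nonneg (c + j).cast_nonneg (Nat.cast_nonneg _)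
          (by push_cast at hk ⊢; linarith) hstep

end Digraph

/-- For any `H`-balanced directed graph on `n` vertices, `ε ∈ (0, 0.1)`, and a vertex `v`
with `δ⁺(v) < H − 2 log n / ε`, we have `(1/2 − ε)·core(v) − 2 log n / ε ≤ δ⁺(v)`. -/
theorem core_lower_bound_outdeg {V : Type*} [Fintype V] [DecidableEq V]
    (E : Finset (V × V)) (H : ℕ) (ε : ℝ) (v : V)
    (hbal : IsHBalanced E H) (hε0 : 0 < ε) (hε1 : ε < 0.1)
    (hv : (outdeg E v : ℝ) < (H : ℝ) - 2 * Real.log (Fintype.card V) / ε) :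
    (1 / 2 - ε) * (core E v : ℝ) - 2 * Real.log (Fintype.card V) / ε ≤ (outdeg E v : ℝ) := by
  by_contra! hcon
  set D := 2 * Real.log (Fintype.card V) / ε
  obtain ⟨S, hvS, hSmin⟩ := exists_mindegIn_eq_core E v
  have hS : ∀ u ∈ S, core E v ≤ udegIn E S u := fun u hu => hSmin ▸ mindegIn_le_udegIn E hu
  have hD : 0 ≤ D := by positivity
  have hcore : 0 < core E v := by
    have : (0 : ℝ) < core E v := by nlinarith [(outdeg E v).cast_nonneg (α := ℝ)]
    exact_mod_cast this
  have hcard : 2 ≤ Fintype.card V := by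
    have := (hS v hvS).trans_lt (udegIn_lt_card E hvS)
    have := card_le_univ S
    omega
  have hfloor := Nat.floor_le hD
  have hgrow := one_add_four_mul_pow_le_card_lowOutdegSet hbal hS hε0.le
    ⟨v, mem_filter.2 ⟨hvS, min_le_left _ _⟩⟩ ⌊D⌋₊
    (by exact_mod_cast (show (outdeg E v + ⌊D⌋₊ : ℝ) < H by linarith)) (by linarith)
  have hle : #(lowOutdegSet E H S (outdeg E v + ⌊D⌋₊)) ≤ Fintype.card V :=
    (card_le_card (filter_subset _ _)).trans (card_le_univ S)
  exact (Real.lt_one_add_four_mul_pow_floor (by exact_mod_cast hcard) hε0 hε1).not_ge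
    (hgrow.trans (by exact_mod_cast hle))
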